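/- Let λ_{k,j} = (1 − 1/k) exp(2πij/k) and K̂_{λ} = (1 − |λ|²)^{1/2} K_λ the normalized Szegő kernels. Then there exist constants 0 < A ≤ B < ∞ such that for all g ∈ H²(𝔻): A‖g‖_{H²} ≤ sup_{k∈ℕ} ( Σ_{j=0}^{k−1} |⟨K̂_{λ_{k,j}}, g⟩|² )^{1/2} ≤ B‖g‖_{H²}. -/

import Mathlib

/-!
Write `g = ∑ cₙ zⁿ`, `N = k + 1`, `r = 1 - 1/N` and `ω = exp(2πi/N)`. Sampling `g` on the circle
of radius `r` at the `N`-th roots of unity aliases the Taylor coefficients: by the discrete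
Parseval identity, `∑_j |g(r ωʲ)|² = N ∑_{d<N} |P_d|²`, where `P_d = ∑_t c_{d+Nt} r^{d+Nt}` collects
one residue class mod `N`. As `(1 - r²) N = 1 + r`, the `k`-th block equals `(1 + r) ∑_d |P_d|²`.

Cauchy–Schwarz against a geometric sequence gives `∑_d |P_d|² ≤ ‖g‖² / (1 - r^{2N})`, and
`r^N ≤ e⁻¹ ≤ 1/2`; this is the upper bound. Splitting off the `t = 0` term, the remainder is `r^N`
times the same kind of sum, hence at most `‖g‖ / √3`, while `∑_{d<N} |c_d|² r^{2d} → ‖g‖²` by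
dominated convergence; this is the lower bound.
-/

open Complex

/-- The point `λ_{k,j} = (1 - 1/(k+1)) exp(2πij/(k+1))`. -/
noncomputable def lamPoint (k : ℕ) (j : Fin (k + 1)) : ℂ :=
  ((1 - 1 / ((k : ℝ) + 1)) : ℂ) *
    Complex.exp (2 * (Real.pi : ℂ) * Complex.I * ((j : ℕ) : ℂ) / (((k : ℕ) : ℂ) + 1))

open Filter Topology

lemma tsum_eq_sum_fin_tsum {R : Type*} [AddCommGroup R] [UniformSpace R] [IsUniformAddGroup R]
    [CompleteSpace R] [T0Space R] {f : ℕ → R} (hf : Summable f) (N : ℕ) [NeZero N] :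
    ∑' n, f n = ∑ d : Fin N, ∑' t, f (d + N * t) := by
  obtain ⟨k, rfl⟩ := Nat.exists_eq_succ_of_ne_zero (NeZero.ne N)
  exact Nat.sumByResidueClasses hf (k + 1)

lemma tsum_mul_pow_eq_sum_fin {N : ℕ} [NeZero N] {ζ : ℂ} (hζ : ζ ^ N = 1) {a : ℕ → ℂ}
    (ha : Summable fun n => a n * ζ ^ n) :
    ∑' n, a n * ζ ^ n = ∑ d : Fin N, ζ ^ (d : ℕ) * ∑' t, a (d + N * t) := by
  rw [tsum_eq_sum_fin_tsum ha N]
  refine Finset.sum_congr rfl fun d _ => ?_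
  simp only [pow_add, pow_mul, hζ, one_pow, mul_one, ← tsum_mul_left, mul_comm]

section Lp

variable {ι E : Type*} [NormedAddCommGroup E]

lemma memℓp_two_of_summable_norm_sq {f : ι → E} (hf : Summable fun i => ‖f i‖ ^ 2) :
    Memℓp f 2 :=
  memℓp_gen (by simpa using hf)

lemma lp.norm_sq_eq_tsum (f : lp (fun _ : ι => E) 2) : ‖f‖ ^ 2 = ∑' i, ‖f i‖ ^ 2 := by
  simpa using lp.norm_rpow_eq_tsum (p := 2) (by norm_num) f

end Lp

/-- The reproducing-kernel bound `|g(z)|² ≤ ‖g‖²_{H²} / (1 - |z|²)`. -/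
lemma norm_tsum_mul_pow_sq_le {b : ℕ → ℂ} (hb : Summable fun t => ‖b t‖ ^ 2) {z : ℂ}
    (hz : ‖z‖ < 1) : ‖∑' t, b t * z ^ t‖ ^ 2 ≤ (1 - ‖z‖ ^ 2)⁻¹ * ∑' t, ‖b t‖ ^ 2 := by
  have hz2 : ‖z‖ ^ 2 < 1 := by nlinarith [norm_nonneg z]
  have hpow (t : ℕ) : ‖(starRingEnd ℂ z) ^ t‖ ^ 2 = (‖z‖ ^ 2) ^ t := by
    rw [norm_pow, RCLike.norm_conj, ← pow_mul, ← pow_mul, mul_comm]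
  have hker : Summable fun t => ‖(starRingEnd ℂ z) ^ t‖ ^ 2 := by
    simpa only [hpow] using summable_geometric_of_lt_one (by positivity) hz2
  let K : lp (fun _ : ℕ => ℂ) 2 := ⟨_, memℓp_two_of_summable_norm_sq hker⟩
  let B : lp (fun _ : ℕ => ℂ) 2 := ⟨b, memℓp_two_of_summable_norm_sq hb⟩
  have hinner : inner ℂ K B = ∑' t, b t * z ^ t := by
    simp [lp.inner_eq_tsum, K, B]
  have hK : ‖K‖ ^ 2 = (1 - ‖z‖ ^ 2)⁻¹ := by
    rw [lp.norm_sq_eq_tsum, ← tsum_geometric_of_lt_one (by positivity) hz2]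
    exact tsum_congr hpow
  calc ‖∑' t, b t * z ^ t‖ ^ 2 = ‖inner ℂ K B‖ ^ 2 := by rw [hinner]
    _ ≤ (‖K‖ * ‖B‖) ^ 2 := by gcongr; exact norm_inner_le_norm K B
    _ = (1 - ‖z‖ ^ 2)⁻¹ * ∑' t, ‖b t‖ ^ 2 := by rw [mul_pow, hK, lp.norm_sq_eq_tsum]

lemma IsPrimitiveRoot.sum_pow_mul_conj_pow {N : ℕ} {ζ : ℂ} (hζ : IsPrimitiveRoot ζ N)
    (d e : Fin N) :
    ∑ j : Fin N, ζ ^ ((j : ℕ) * d) * starRingEnd ℂ (ζ ^ ((j : ℕ) * e)) =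
      if d = e then (N : ℂ) else 0 := by
  have hζ1 : ‖ζ‖ = 1 := hζ.norm'_eq_one (Fin.pos d).ne'
  have hζ0 : ζ ≠ 0 := by rintro rfl; simp at hζ1
  have hconj (n : ℕ) : starRingEnd ℂ (ζ ^ n) = (ζ ^ n)⁻¹ := by
    rw [Complex.inv_def, Complex.normSq_eq_norm_sq, norm_pow, hζ1]; simp
  set u := ζ ^ (d : ℕ) * (ζ ^ (e : ℕ))⁻¹
  have hterm (j : Fin N) :
      ζ ^ ((j : ℕ) * d) * starRingEnd ℂ (ζ ^ ((j : ℕ) * e)) = u ^ (j : ℕ) := by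
    rw [hconj, mul_pow, inv_pow, ← pow_mul, ← pow_mul, mul_comm (d : ℕ), mul_comm (e : ℕ)]
  simp only [hterm, Fin.sum_univ_eq_sum_range (fun j => u ^ j)]
  split_ifs with hde
  · subst hde; simp [u, hζ0]
  · have hu : u ≠ 1 := fun h => hde <| Fin.ext <| hζ.pow_inj d.isLt e.isLt <|
      by rwa [mul_inv_eq_one₀ (pow_ne_zero _ hζ0)] at h
    rw [geom_sum_eq hu, mul_pow, inv_pow, ← pow_mul, ← pow_mul, mul_comm _ N, mul_comm _ N,
      pow_mul, pow_mul, hζ.pow_eq_one]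
    simp

lemma IsPrimitiveRoot.sum_norm_sq_dft {N : ℕ} {ζ : ℂ} (hζ : IsPrimitiveRoot ζ N)
    (x : Fin N → ℂ) :
    ∑ j : Fin N, ‖∑ d : Fin N, ζ ^ ((j : ℕ) * d) * x d‖ ^ 2 = N * ∑ d : Fin N, ‖x d‖ ^ 2 := by
  apply Complex.ofReal_injective
  push_cast
  simp only [← Complex.mul_conj']
  calc ∑ j : Fin N, (∑ d : Fin N, ζ ^ ((j : ℕ) * d) * x d) *
        starRingEnd ℂ (∑ e : Fin N, ζ ^ ((j : ℕ) * e) * x e)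
      = ∑ d : Fin N, ∑ e : Fin N,
          (∑ j : Fin N, ζ ^ ((j : ℕ) * d) * starRingEnd ℂ (ζ ^ ((j : ℕ) * e))) *
            (x d * starRingEnd ℂ (x e)) := by
        simp_rw [map_sum, Finset.sum_mul_sum, Finset.sum_mul]
        rw [Finset.sum_comm]
        refine Finset.sum_congr rfl fun d _ => ?_
        rw [Finset.sum_comm]
        refine Finset.sum_congr rfl fun e _ => Finset.sum_congr rfl fun j _ => ?_
        rw [map_mul]; ring
    _ = N * ∑ d : Fin N, x d * starRingEnd ℂ (x d) := by
        simp only [hζ.sum_pow_mul_conj_pow, ite_mul, zero_mul, Finset.sum_ite_eq,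
          Finset.mem_univ, if_true, Finset.mul_sum]

lemma sqrt_sum_norm_sq_sub_le {𝕜 ι : Type*} [RCLike 𝕜] [Fintype ι] (u v : ι → 𝕜) :
    √(∑ i, ‖u i - v i‖ ^ 2) ≤ √(∑ i, ‖u i‖ ^ 2) + √(∑ i, ‖v i‖ ^ 2) := by
  simpa [EuclideanSpace.norm_eq] using
    norm_sub_le (WithLp.toLp 2 u : EuclideanSpace 𝕜 ι) (WithLp.toLp 2 v)

lemma tsum_norm_sq_nat_add_le {E : Type*} [NormedAddCommGroup E] {c : ℕ → E}
    (hc : Summable fun n => ‖c n‖ ^ 2) (k : ℕ) :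
    ∑' n, ‖c (n + k)‖ ^ 2 ≤ ∑' n, ‖c n‖ ^ 2 := by
  rw [← hc.sum_add_tsum_nat_add k]
  exact le_add_of_nonneg_left (Finset.sum_nonneg fun n _ => by positivity)

/-- The `d`-th polyphase component `z^d G_d(z^N)` of `g(z) = ∑ cₙ zⁿ`, so that
`g = ∑_{d<N} polyphase c N d`. -/
noncomputable def polyphase (c : ℕ → ℂ) (N d : ℕ) (z : ℂ) : ℂ :=
  ∑' t, c (d + N * t) * z ^ (d + N * t)

section Polyphase

variable {c : ℕ → ℂ} {N : ℕ} {z : ℂ}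

lemma polyphase_eq_pow_mul_tsum (d : ℕ) :
    polyphase c N d z = z ^ d * ∑' t, c (d + N * t) * (z ^ N) ^ t := by
  rw [polyphase, ← tsum_mul_left]
  congr 1 with t
  ring

lemma norm_polyphase_sq_le [NeZero N] (hc : Summable fun n => ‖c n‖ ^ 2) (hz : ‖z‖ < 1)
    (d : ℕ) : ‖polyphase c N d z‖ ^ 2 ≤ (1 - ‖z‖ ^ (2 * N))⁻¹ * ∑' t, ‖c (d + N * t)‖ ^ 2 := by
  have hzN : ‖z ^ N‖ < 1 := by
    rw [norm_pow]; exact pow_lt_one₀ (norm_nonneg z) hz (NeZero.ne N)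
  have hsub : Summable fun t => ‖c (d + N * t)‖ ^ 2 :=
    hc.comp_injective fun s t h => by simpa [NeZero.ne N] using h
  rw [polyphase_eq_pow_mul_tsum, norm_mul, mul_pow]
  calc ‖z ^ d‖ ^ 2 * ‖∑' t, c (d + N * t) * (z ^ N) ^ t‖ ^ 2
      ≤ 1 * ‖∑' t, c (d + N * t) * (z ^ N) ^ t‖ ^ 2 := by
        gcongr
        rw [norm_pow]; exact pow_le_one₀ (by positivity) (pow_le_one₀ (by positivity) hz.le)
    _ ≤ (1 - ‖z‖ ^ (2 * N))⁻¹ * ∑' t, ‖c (d + N * t)‖ ^ 2 := by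
        have := norm_tsum_mul_pow_sq_le hsub hzN
        rw [one_mul]; rwa [norm_pow, ← pow_mul, mul_comm N 2] at this

lemma sum_norm_polyphase_sq_le [NeZero N] (hc : Summable fun n => ‖c n‖ ^ 2) (hz : ‖z‖ < 1) :
    ∑ d : Fin N, ‖polyphase c N d z‖ ^ 2 ≤ (1 - ‖z‖ ^ (2 * N))⁻¹ * ∑' n, ‖c n‖ ^ 2 := by
  rw [tsum_eq_sum_fin_tsum hc N, Finset.mul_sum]
  exact Finset.sum_le_sum fun d _ => norm_polyphase_sq_le hc hz d

lemma polyphase_eq_add [NeZero N] (hs : Summable fun n => c n * z ^ n) (d : ℕ) :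
    polyphase c N d z = c d * z ^ d + z ^ N * polyphase (fun n => c (n + N)) N d z := by
  have hsub : Summable fun t => c (d + N * t) * z ^ (d + N * t) :=
    hs.comp_injective (f := fun n => c n * z ^ n) fun s t h => by simpa [NeZero.ne N] using h
  rw [polyphase, hsub.tsum_eq_zero_add, polyphase, ← tsum_mul_left]
  congr 1
  refine tsum_congr fun t => ?_
  rw [show d + N * (t + 1) = d + N * t + N by ring, pow_add]
  ring

lemma sqrt_sum_norm_sq_le_polyphase [NeZero N] (hc : Summable fun n => ‖c n‖ ^ 2)
    (hs : Summable fun n => c n * z ^ n) (hz : ‖z‖ < 1) :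
    √(∑ d : Fin N, ‖c d * z ^ (d : ℕ)‖ ^ 2) ≤ √(∑ d : Fin N, ‖polyphase c N d z‖ ^ 2) +
      √(‖z‖ ^ (2 * N) * (1 - ‖z‖ ^ (2 * N))⁻¹ * ∑' n, ‖c n‖ ^ 2) := by
  have hc' : Summable fun n => ‖c (n + N)‖ ^ 2 := (summable_nat_add_iff N).2 hc
  have htail : ∑ d : Fin N, ‖z ^ N * polyphase (fun n => c (n + N)) N d z‖ ^ 2 ≤
      ‖z‖ ^ (2 * N) * (1 - ‖z‖ ^ (2 * N))⁻¹ * ∑' n, ‖c n‖ ^ 2 := by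
    have hq : 0 ≤ (1 - ‖z‖ ^ (2 * N))⁻¹ := by
      rw [inv_nonneg, sub_nonneg]; exact pow_le_one₀ (norm_nonneg z) hz.le
    simp only [norm_mul, mul_pow, ← Finset.mul_sum, norm_pow, ← pow_mul, mul_comm N 2,
      mul_assoc]
    gcongr
    exact (sum_norm_polyphase_sq_le hc' hz).trans
      (mul_le_mul_of_nonneg_left (tsum_norm_sq_nat_add_le hc N) hq)
  calc √(∑ d : Fin N, ‖c d * z ^ (d : ℕ)‖ ^ 2)
      = √(∑ d : Fin N,
          ‖polyphase c N d z - z ^ N * polyphase (fun n => c (n + N)) N d z‖ ^ 2) := by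
        simp only [polyphase_eq_add hs, add_sub_cancel_right]
    _ ≤ _ := (sqrt_sum_norm_sq_sub_le _ _).trans (add_le_add_right (Real.sqrt_le_sqrt htail) _)

lemma sum_norm_sq_eval_mul_pow_eq [NeZero N] {ζ : ℂ} (hζ : IsPrimitiveRoot ζ N) {g : ℂ → ℂ}
    (hg : ∀ w : ℂ, ‖w‖ < 1 → HasSum (fun n => c n * w ^ n) (g w)) (hz : ‖z‖ < 1) :
    ∑ j : Fin N, ‖g (z * ζ ^ (j : ℕ))‖ ^ 2 = N * ∑ d : Fin N, ‖polyphase c N d z‖ ^ 2 := by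
  have hζ1 : ‖ζ‖ = 1 := hζ.norm'_eq_one (NeZero.ne N)
  have heval (j : Fin N) :
      g (z * ζ ^ (j : ℕ)) = ∑ d : Fin N, ζ ^ ((j : ℕ) * d) * polyphase c N d z := by
    have hsum := hg (z * ζ ^ (j : ℕ)) (by simpa [hζ1] using hz)
    simp only [mul_pow, ← mul_assoc] at hsum
    rw [← hsum.tsum_eq, tsum_mul_pow_eq_sum_fin (by rw [← pow_mul, mul_comm, pow_mul,
      hζ.pow_eq_one, one_pow]) hsum.summable]
    simp only [pow_mul, polyphase]
  simp only [heval, hζ.sum_norm_sq_dft]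

lemma tendsto_sum_norm_sq_mul_pow {r : ℕ → ℝ} (hr0 : ∀ k, 0 ≤ r k) (hr1 : ∀ k, r k ≤ 1)
    (hr : Tendsto r atTop (𝓝 1)) (hc : Summable fun n => ‖c n‖ ^ 2) :
    Tendsto (fun k => ∑ d : Fin (k + 1), ‖c d * (r k : ℂ) ^ (d : ℕ)‖ ^ 2) atTop
      (𝓝 (∑' n, ‖c n‖ ^ 2)) := by
  have hnorm (k n : ℕ) : ‖c n * (r k : ℂ) ^ n‖ ^ 2 = ‖c n‖ ^ 2 * (r k ^ n) ^ 2 := by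
    rw [norm_mul, norm_pow, Complex.norm_real, Real.norm_of_nonneg (hr0 k), mul_pow]
  have htsum (k : ℕ) : ∑ d : Fin (k + 1), ‖c d * (r k : ℂ) ^ (d : ℕ)‖ ^ 2 =
      ∑' n, if n < k + 1 then ‖c n‖ ^ 2 * (r k ^ n) ^ 2 else 0 := by
    rw [Fin.sum_univ_eq_sum_range (fun n => ‖c n * (r k : ℂ) ^ n‖ ^ 2),
      tsum_eq_sum (s := Finset.range (k + 1)) fun n hn => if_neg (by simpa using hn)]
    exact Finset.sum_congr rfl fun n hn => by rw [if_pos (by simpa using hn), hnorm]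
  simp only [htsum]
  refine tendsto_tsum_of_dominated_convergence hc (fun n => ?_)
    (Eventually.of_forall fun k n => ?_)
  · have hlim : Tendsto (fun k => ‖c n‖ ^ 2 * (r k ^ n) ^ 2) atTop (𝓝 (‖c n‖ ^ 2)) := by
      simpa using ((hr.pow n).pow 2).const_mul (‖c n‖ ^ 2)
    exact hlim.congr' ((eventually_ge_atTop n).mono fun k hk => (if_pos (by omega)).symm)
  · split_ifs
    · rw [Real.norm_of_nonneg (by positivity)]
      exact mul_le_of_le_one_right (by positivity)
        (pow_le_one₀ (pow_nonneg (hr0 k) n) (pow_le_one₀ (hr0 k) (hr1 k)))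
    · simp

end Polyphase
noncomputable def lamRadius (k : ℕ) : ℝ := 1 - 1 / ((k : ℝ) + 1)

lemma lamRadius_nonneg (k : ℕ) : 0 ≤ lamRadius k := by
  rw [lamRadius, sub_nonneg, div_le_one (by positivity)]; linarith [k.cast_nonneg (α := ℝ)]

lemma lamRadius_lt_one (k : ℕ) : lamRadius k < 1 := by
  rw [lamRadius]; linarith [show 0 < 1 / ((k : ℝ) + 1) by positivity]

lemma lamRadius_pow_le_half (k : ℕ) : lamRadius k ^ (k + 1) ≤ 1 / 2 := by
  calc lamRadius k ^ (k + 1) ≤ Real.exp (-1) := by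
        simpa [lamRadius] using Real.one_sub_div_pow_le_exp_neg (n := k + 1) (t := 1) (by simp)
    _ ≤ 1 / 2 := by
        rw [Real.exp_neg, one_div]
        exact inv_anti₀ (by norm_num) (by linarith [Real.add_one_le_exp 1])

lemma lamRadius_pow_two_mul_le (k : ℕ) : lamRadius k ^ (2 * (k + 1)) ≤ 1 / 4 := by
  rw [pow_mul', show (1 / 4 : ℝ) = (1 / 2) ^ 2 by norm_num]
  exact pow_le_pow_left₀ (pow_nonneg (lamRadius_nonneg k) _) (lamRadius_pow_le_half k) 2

lemma inv_one_sub_lamRadius_pow_le (k : ℕ) : (1 - lamRadius k ^ (2 * (k + 1)))⁻¹ ≤ 4 / 3 := by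
  rw [inv_le_comm₀ (by linarith [lamRadius_pow_two_mul_le k]) (by norm_num)]
  linarith [lamRadius_pow_two_mul_le k]

lemma norm_lamRadius (k : ℕ) : ‖(lamRadius k : ℂ)‖ = lamRadius k := by
  rw [Complex.norm_real, Real.norm_of_nonneg (lamRadius_nonneg k)]

lemma norm_lamRadius_lt_one (k : ℕ) : ‖(lamRadius k : ℂ)‖ < 1 :=
  (norm_lamRadius k).trans_lt (lamRadius_lt_one k)

lemma tendsto_lamRadius : Tendsto lamRadius atTop (𝓝 1) := by
  have := (tendsto_one_div_add_atTop_nhds_zero_nat (𝕜 := ℝ)).const_sub 1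
  rwa [sub_zero] at this

lemma lamPoint_eq (k : ℕ) (j : Fin (k + 1)) :
    lamPoint k j = (lamRadius k : ℂ) * cexp (2 * Real.pi * I / ((k + 1 : ℕ) : ℂ)) ^ (j : ℕ) := by
  rw [lamPoint, lamRadius, ← Complex.exp_nat_mul]
  push_cast
  ring_nf

lemma norm_lamPoint (k : ℕ) (j : Fin (k + 1)) : ‖lamPoint k j‖ = lamRadius k := by
  rw [lamPoint_eq, norm_mul, norm_pow, (Complex.isPrimitiveRoot_exp _ k.succ_ne_zero).norm'_eq_one
    k.succ_ne_zero, one_pow, mul_one, norm_lamRadius]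

noncomputable def blockNormSq (g : ℂ → ℂ) (k : ℕ) : ℝ :=
  ∑ j : Fin (k + 1), (1 - ‖lamPoint k j‖ ^ 2) * ‖g (lamPoint k j)‖ ^ 2

section Blocks

variable {c : ℕ → ℂ} {g : ℂ → ℂ} (hg : ∀ z : ℂ, ‖z‖ < 1 → HasSum (fun n => c n * z ^ n) (g z))
include hg

lemma blockNormSq_eq (k : ℕ) :
    blockNormSq g k = (1 + lamRadius k) *
      ∑ d : Fin (k + 1), ‖polyphase c (k + 1) d (lamRadius k)‖ ^ 2 := by
  have hr := norm_lamRadius_lt_one k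
  have hk : ((k : ℝ) + 1) ≠ 0 := by positivity
  simp only [blockNormSq, norm_lamPoint]
  simp only [← Finset.mul_sum, lamPoint_eq]
  rw [sum_norm_sq_eval_mul_pow_eq (Complex.isPrimitiveRoot_exp (k + 1) k.succ_ne_zero) hg hr,
    ← mul_assoc]
  congr 1
  rw [lamRadius]; push_cast; field_simp; ring

lemma blockNormSq_le (hc : Summable fun n => ‖c n‖ ^ 2) (k : ℕ) :
    blockNormSq g k ≤ 4 * ∑' n, ‖c n‖ ^ 2 := by
  have hP := sum_norm_polyphase_sq_le (N := k + 1) hc (norm_lamRadius_lt_one k)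
  rw [norm_lamRadius] at hP
  rw [blockNormSq_eq hg]
  calc (1 + lamRadius k) * ∑ d : Fin (k + 1), ‖polyphase c (k + 1) d (lamRadius k)‖ ^ 2
      ≤ 2 * (4 / 3 * ∑' n, ‖c n‖ ^ 2) := by
        gcongr
        · linarith [lamRadius_lt_one k]
        · exact hP.trans (by gcongr; exact inv_one_sub_lamRadius_pow_le k)
    _ ≤ 4 * ∑' n, ‖c n‖ ^ 2 := by
        linarith [(tsum_nonneg fun n => sq_nonneg ‖c n‖ : 0 ≤ ∑' n, ‖c n‖ ^ 2)]

lemma sqrt_sum_norm_sq_mul_lamRadius_pow_le (hc : Summable fun n => ‖c n‖ ^ 2) (k : ℕ) :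
    √(∑ d : Fin (k + 1), ‖c d * (lamRadius k : ℂ) ^ (d : ℕ)‖ ^ 2) ≤
      √(blockNormSq g k) + 3 / 4 * √(∑' n, ‖c n‖ ^ 2) := by
  have hr := norm_lamRadius_lt_one k
  have h := sqrt_sum_norm_sq_le_polyphase (N := k + 1) hc (hg _ hr).summable hr
  rw [norm_lamRadius] at h
  refine h.trans (add_le_add (Real.sqrt_le_sqrt ?_) ?_)
  · rw [blockNormSq_eq hg]
    exact le_mul_of_one_le_left (Finset.sum_nonneg fun d _ => by positivity)
      (by linarith [lamRadius_nonneg k])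
  · rw [show 3 / 4 * √(∑' n, ‖c n‖ ^ 2) = √((3 / 4) ^ 2 * ∑' n, ‖c n‖ ^ 2) by
      rw [Real.sqrt_mul (by positivity), Real.sqrt_sq (by norm_num)]]
    gcongr
    calc lamRadius k ^ (2 * (k + 1)) * (1 - lamRadius k ^ (2 * (k + 1)))⁻¹ ≤ 1 / 4 * (4 / 3) :=
          mul_le_mul (lamRadius_pow_two_mul_le k) (inv_one_sub_lamRadius_pow_le k)
            (inv_nonneg.2 (by linarith [lamRadius_pow_two_mul_le k])) (by norm_num)
      _ ≤ (3 / 4) ^ 2 := by norm_num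

end Blocks

/-- Frame inequalities for the normalized Szegő kernels `K̂_{λ_{k,j}}` in the
mixed-norm space `ℓ^∞(ℓ²_k)`: there are `0 < A ≤ B < ∞` with
`A‖g‖ ≤ sup_k (Σ_j |⟨K̂_{λ_{k,j}}, g⟩|²)^{1/2} ≤ B‖g‖` for all `g ∈ H²(𝔻)`,
using `|⟨K̂_λ, g⟩|² = (1 - |λ|²)|g(λ)|²`. -/
theorem normalized_szego_frame_inequalities :
    ∃ A B : ℝ, 0 < A ∧ A ≤ B ∧
      ∀ (c : ℕ → ℂ), Summable (fun n => ‖c n‖ ^ 2) →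
        ∀ g : ℂ → ℂ, (∀ z : ℂ, ‖z‖ < 1 → HasSum (fun n => c n * z ^ n) (g z)) →
          A * Real.sqrt (∑' n, ‖c n‖ ^ 2)
              ≤ (⨆ k : ℕ, Real.sqrt (∑ j : Fin (k + 1),
                  (1 - ‖lamPoint k j‖ ^ 2) * ‖g (lamPoint k j)‖ ^ 2)) ∧
          (⨆ k : ℕ, Real.sqrt (∑ j : Fin (k + 1),
              (1 - ‖lamPoint k j‖ ^ 2) * ‖g (lamPoint k j)‖ ^ 2))
            ≤ B * Real.sqrt (∑' n, ‖c n‖ ^ 2) := by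
  refine ⟨1 / 4, 2, by norm_num, by norm_num, fun c hc g hg => ?_⟩
  have hupper (k : ℕ) : √(blockNormSq g k) ≤ 2 * √(∑' n, ‖c n‖ ^ 2) := by
    rw [show (2 : ℝ) = √4 by rw [show (4 : ℝ) = 2 ^ 2 by norm_num, Real.sqrt_sq zero_le_two],
      ← Real.sqrt_mul zero_le_four]
    exact Real.sqrt_le_sqrt (blockNormSq_le hg hc k)
  have hbdd : BddAbove (Set.range fun k => √(blockNormSq g k)) :=
    ⟨_, Set.forall_mem_range.2 hupper⟩
  refine ⟨?_, ciSup_le hupper⟩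
  have hmain := (tendsto_sum_norm_sq_mul_pow lamRadius_nonneg (fun k => (lamRadius_lt_one k).le)
    tendsto_lamRadius hc).sqrt
  have hlower := le_of_tendsto' hmain fun k =>
    (sqrt_sum_norm_sq_mul_lamRadius_pow_le hg hc k).trans (add_le_add_left (le_ciSup hbdd k) _)
  change 1 / 4 * _ ≤ ⨆ k, √(blockNormSq g k)
  linarith
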